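/- Assume λ_A ≤ 0. Let (u, v) : [0, ∞) → ℝ² be a differentiable solution of the ODE system (S) with u(t) ≥ 0 and v(t) ≥ 0 for all t ≥ 0. Then (u(t), v(t)) converges to (0, 0) as t → +∞. -/

import Mathlib

/-!
The larger eigenvalue `λ` of the linearisation `A` has a positive left eigenvector `(p, q)`, so
`L = p u + q v` satisfies `L' = λ L - (κu p u + κv q v)(u + v) ≤ -k L²` on the positive quadrant
when `λ ≤ 0`. A nonnegative function with `L' ≤ -k L²` tends to `0`, and `u`, `v` are squeezed
between `0` and multiples of `L`.
-/

open Set Filter Topology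

/-- The paper's `λ_A` for `A = !![a, b; c, d]`; when `b c > 0`, `(c, λ_A - a)` is a positive left
eigenvector of `A`. -/
noncomputable def perronRoot (a b c d : ℝ) : ℝ :=
  (a + d + √((a - d) ^ 2 + 4 * b * c)) / 2

section perronRoot

variable {a b c d : ℝ}

lemma lt_perronRoot (hbc : 0 < b * c) : a < perronRoot a b c d := by
  have : |a - d| < √((a - d) ^ 2 + 4 * b * c) := by
    rw [← Real.sqrt_sq_eq_abs]
    exact Real.sqrt_lt_sqrt (sq_nonneg _) (by linarith)
  rw [perronRoot]
  linarith [le_abs_self (a - d)]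

lemma perronRoot_mul_sub (hbc : 0 ≤ b * c) :
    c * b + (perronRoot a b c d - a) * d = perronRoot a b c d * (perronRoot a b c d - a) := by
  have hsq : √((a - d) ^ 2 + 4 * b * c) ^ 2 = (a - d) ^ 2 + 4 * b * c :=
    Real.sq_sqrt (by nlinarith [sq_nonneg (a - d)])
  rw [perronRoot]
  linear_combination (-1 / 4 : ℝ) * hsq

end perronRoot

lemma antitoneOn_of_hasDerivWithinAt_nonpos' {D : Set ℝ} (hD : Convex ℝ D) {f f' : ℝ → ℝ}
    (hf : ∀ x ∈ D, HasDerivWithinAt f (f' x) D x) (hf' : ∀ x ∈ D, f' x ≤ 0) :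
    AntitoneOn f D :=
  antitoneOn_of_hasDerivWithinAt_nonpos hD (fun x hx ↦ (hf x hx).continuousWithinAt)
    (fun x hx ↦ (hf x (interior_subset hx)).mono interior_subset)
    (fun x hx ↦ hf' x (interior_subset hx))

section Decay

variable {f f' : ℝ → ℝ} {a k : ℝ}

/-- If `f ≥ ε` throughout, then `f t + k ε² t` is antitone, so `f` would reach `0` by time
`a + f a / (k ε²)`. -/
lemma exists_lt_of_hasDerivWithinAt_le_neg_sq (hk : 0 < k)
    (hf : ∀ t ∈ Ici a, HasDerivWithinAt f (f' t) (Ici a) t)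
    (hle : ∀ t ∈ Ici a, f' t ≤ -k * f t ^ 2) {ε : ℝ} (hε : 0 < ε) : ∃ T ∈ Ici a, f T < ε := by
  by_contra! h
  have hc : 0 < k * ε ^ 2 := by positivity
  have hanti : AntitoneOn (fun t ↦ f t + k * ε ^ 2 * t) (Ici a) := by
    refine antitoneOn_of_hasDerivWithinAt_nonpos' (convex_Ici a) (f' := fun t ↦ f' t + k * ε ^ 2)
      (fun t ht ↦ (hf t ht).add (by simpa using (hasDerivWithinAt_id t _).const_mul (k * ε ^ 2)))
      fun t ht ↦ ?_
    have : k * ε ^ 2 ≤ k * f t ^ 2 := by gcongr; exact h t ht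
    linarith [hle t ht]
  set T := a + f a / (k * ε ^ 2)
  have hT : a ≤ T := le_add_of_nonneg_right (div_nonneg (hε.le.trans (h a self_mem_Ici)) hc.le)
  have hdrop := hanti self_mem_Ici hT hT
  have hcT : k * ε ^ 2 * T = k * ε ^ 2 * a + f a := by
    simp only [T]; field_simp
  linarith [h T hT]

lemma tendsto_zero_of_hasDerivWithinAt_le_neg_sq (hk : 0 < k)
    (hf : ∀ t ∈ Ici a, HasDerivWithinAt f (f' t) (Ici a) t)
    (hnn : ∀ t ∈ Ici a, 0 ≤ f t) (hle : ∀ t ∈ Ici a, f' t ≤ -k * f t ^ 2) :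
    Tendsto f atTop (𝓝 0) := by
  have hanti : AntitoneOn f (Ici a) := antitoneOn_of_hasDerivWithinAt_nonpos' (convex_Ici a) hf
    fun t ht ↦ (hle t ht).trans (by nlinarith [sq_nonneg (f t)])
  refine tendsto_order.2 ⟨fun δ hδ ↦ ?_, fun ε hε ↦ ?_⟩
  · filter_upwards [eventually_ge_atTop a] with t ht using hδ.trans_le (hnn t ht)
  · obtain ⟨T, hT, hTε⟩ := exists_lt_of_hasDerivWithinAt_le_neg_sq hk hf hle hε
    filter_upwards [eventually_ge_atTop T] with t ht
    exact (hanti hT (mem_Ici.2 (hT.out.trans ht)) ht).trans_lt hTε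

end Decay

lemma min_div_max_mul_sq_le {p q α β x y : ℝ} (hp : 0 < p) (hq : 0 < q) (hα : 0 < α)
    (hβ : 0 < β) (hx : 0 ≤ x) (hy : 0 ≤ y) :
    min α β / max p q * (p * x + q * y) ^ 2 ≤ (α * p * x + β * q * y) * (x + y) := by
  have hM : 0 < max p q := lt_max_of_lt_left hp
  have hL : p * x + q * y ≤ max p q * (x + y) := by
    nlinarith [le_max_left p q, le_max_right p q]
  have hm : min α β * (p * x + q * y) ≤ α * p * x + β * q * y := by
    nlinarith [min_le_left α β, min_le_right α β, mul_nonneg hp.le hx, mul_nonneg hq.le hy]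
  rw [div_mul_eq_mul_div, div_le_iff₀ hM, sq]
  calc min α β * ((p * x + q * y) * (p * x + q * y))
      = min α β * (p * x + q * y) * (p * x + q * y) := by ring
    _ ≤ (α * p * x + β * q * y) * (max p q * (x + y)) := by gcongr
    _ = _ := by ring

/-- `h₁`, `h₂` say that `(p, q)` is a left eigenvector of `A` with eigenvalue `lam`. -/
lemma hasDerivWithinAt_leftEigen_comb {ru rv κu κv μu μv p q lam : ℝ} {u v : ℝ → ℝ}
    {s : Set ℝ} {t : ℝ}
    (h₁ : p * (ru - μu) + q * μu = lam * p) (h₂ : p * μv + q * (rv - μv) = lam * q)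
    (hu : HasDerivWithinAt u ((ru - κu * (u t + v t)) * u t + μv * v t - μu * u t) s t)
    (hv : HasDerivWithinAt v ((rv - κv * (u t + v t)) * v t + μu * u t - μv * v t) s t) :
    HasDerivWithinAt (fun t ↦ p * u t + q * v t)
      (lam * (p * u t + q * v t) - (κu * p * u t + κv * q * v t) * (u t + v t)) s t :=
  ((hu.const_mul p).add (hv.const_mul q)).congr_deriv
    (by linear_combination u t * h₁ + v t * h₂)

lemma tendsto_prodMk_zero_of_weighted_sum {α : Type*} {l : Filter α} {u v : α → ℝ} {p q : ℝ}
    (hp : 0 < p) (hq : 0 < q) (hu : ∀ᶠ t in l, 0 ≤ u t) (hv : ∀ᶠ t in l, 0 ≤ v t)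
    (h : Tendsto (fun t ↦ p * u t + q * v t) l (𝓝 0)) :
    Tendsto (fun t ↦ (u t, v t)) l (𝓝 (0, 0)) := by
  refine Tendsto.prodMk_nhds (squeeze_zero' hu ?_ (by simpa using h.div_const p))
    (squeeze_zero' hv ?_ (by simpa using h.div_const q))
  · filter_upwards [hu, hv] with t hut hvt
    rw [le_div_iff₀ hp]; nlinarith
  · filter_upwards [hu, hv] with t hut hvt
    rw [le_div_iff₀ hq]; nlinarith

/-- If λ_A ≤ 0, every nonnegative solution of (S) on [0, ∞)
converges to (0, 0) as t → +∞. -/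
theorem stmt14 (ru rv κu κv μu μv : ℝ)
    (hκu : 0 < κu) (hκv : 0 < κv) (hμu : 0 < μu) (hμv : 0 < μv)
    (hlamA : (ru - μu + rv - μv +
      Real.sqrt ((ru - μu - rv + μv) ^ 2 + 4 * μu * μv)) / 2 ≤ 0)
    (u v : ℝ → ℝ)
    (hu : ∀ t ∈ Set.Ici (0 : ℝ), HasDerivWithinAt u
      ((ru - κu * (u t + v t)) * u t + μv * v t - μu * u t) (Set.Ici 0) t)
    (hv : ∀ t ∈ Set.Ici (0 : ℝ), HasDerivWithinAt v
      ((rv - κv * (u t + v t)) * v t + μu * u t - μv * v t) (Set.Ici 0) t)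
    (hnn : ∀ t : ℝ, 0 ≤ t → 0 ≤ u t ∧ 0 ≤ v t) :
    Filter.Tendsto (fun t => (u t, v t)) Filter.atTop (nhds ((0 : ℝ), (0 : ℝ))) := by
  set lam := perronRoot (ru - μu) μv μu (rv - μv)
  have hlam : lam ≤ 0 := by
    refine le_of_eq_of_le ?_ hlamA
    simp only [lam, perronRoot]
    ring_nf
  have hq : 0 < lam - (ru - μu) := sub_pos.2 (lt_perronRoot (by positivity))
  have hL := fun t ht ↦ hasDerivWithinAt_leftEigen_comb (p := μu) (q := lam - (ru - μu))
    (lam := lam) (by ring) (perronRoot_mul_sub (by positivity)) (hu t ht) (hv t ht)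
  have hLnn : ∀ t ∈ Ici (0 : ℝ), 0 ≤ μu * u t + (lam - (ru - μu)) * v t := fun t ht ↦
    add_nonneg (mul_nonneg hμu.le (hnn t ht).1) (mul_nonneg hq.le (hnn t ht).2)
  refine tendsto_prodMk_zero_of_weighted_sum hμu hq
    (eventually_ge_atTop 0 |>.mono fun t ht ↦ (hnn t ht).1)
    (eventually_ge_atTop 0 |>.mono fun t ht ↦ (hnn t ht).2)
    (tendsto_zero_of_hasDerivWithinAt_le_neg_sq (k := min κu κv / max μu (lam - (ru - μu)))
      (by positivity) hL hLnn fun t ht ↦ ?_)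
  have := min_div_max_mul_sq_le hμu hq hκu hκv (hnn t ht).1 (hnn t ht).2
  nlinarith [mul_nonpos_of_nonpos_of_nonneg hlam (hLnn t ht)]
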